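/- arXiv:1104.0862 — 4 statements merged into one kernel-verified Lean document; each statement's English description precedes it below -/
import Mathlib

section
/- Let (X^n, Y^n) = (X_0,…,X_n, Y_0,…,Y_n) be random variables with values in the Polish product spaces X_{0,n} and Y_{0,n} under a probability measure P. Then the following two families of conditional independence conditions are equivalent: (i) for each i = 0, 1, …, n−1, Y_i is conditionally independent of (X_{i+1}, …, X_n) given (X^i, Y^{i−1}); (ii) for each i = 0, 1, …, n−1, Y^i is conditionally independent of X_{i+1} given X^i. -/
/-!
Write `F j = σ(X_0, …, X_j)`, `G j = σ(Y_0, …, Y_j)` and `H j = σ(X_{j+1}, …, X_n)`. Both families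
of conditions are equivalent to `G j ⫫ H j | F j` for every `j`. The tool is the chain rule
`m₁ ⊔ m₁' ⫫ m₂ | m' ↔ (m₁ ⫫ m₂ | m') ∧ (m₁' ⫫ m₂ | m' ⊔ m₁)`, which follows from the
characterisation of `m₁ ⫫ m₂ | m'` by `P(t | m' ⊔ m₁) = P(t | m')` for `t ∈ m₂`. Splitting
`G j = G (j-1) ⊔ σ(Y_j)` turns condition (i) into an upward induction on `j`, and splitting
`H j = σ(X_{j+1}) ⊔ H (j+1)` turns condition (ii) into a downward induction.
-/

open MeasureTheory ProbabilityTheory MeasurableSpace Set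

namespace MeasureTheory

variable {Ω : Type*} {m' mΩ : MeasurableSpace Ω} {μ : Measure Ω} [IsFiniteMeasure μ]

lemma condExp_indicator_inter_ae_eq {s t : Set Ω} (hs : MeasurableSet[m'] s)
    (ht : MeasurableSet t) :
    μ⟦s ∩ t | m'⟧ =ᵐ[μ] s.indicator (μ⟦t | m'⟧) := by
  rw [← indicator_indicator]
  exact condExp_indicator ((integrable_const 1).indicator ht) hs

lemma condExp_indicator_ae_eq_condExp_mul {s : Set Ω} {g : Ω → ℝ}
    (hg : StronglyMeasurable[m'] g) (hgi : Integrable g μ) (hs : MeasurableSet s) :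
    μ[s.indicator g | m'] =ᵐ[μ] μ⟦s | m'⟧ * g := by
  have hind : s.indicator g = s.indicator (fun _ => 1) * g :=
    funext fun x => by simp only [Pi.mul_apply, ← indicator_mul_left, one_mul]
  rw [hind]
  exact condExp_mul_of_stronglyMeasurable_right hg (hind ▸ hgi.indicator hs)
    ((integrable_const 1).indicator hs)

end MeasureTheory

section PiSystem

variable {Ω : Type*} {m₁ m₂ : MeasurableSpace Ω}

lemma isPiSystem_image2_inter :
    IsPiSystem (image2 (· ∩ ·) {s | MeasurableSet[m₁] s} {s | MeasurableSet[m₂] s}) := by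
  rintro _ ⟨s₁, hs₁, s₂, hs₂, rfl⟩ _ ⟨t₁, ht₁, t₂, ht₂, rfl⟩ -
  exact ⟨s₁ ∩ t₁, MeasurableSet.inter hs₁ ht₁, s₂ ∩ t₂, MeasurableSet.inter hs₂ ht₂,
    inter_inter_inter_comm _ _ _ _⟩

lemma MeasurableSpace.sup_eq_generateFrom_image2_inter :
    m₁ ⊔ m₂ =
      generateFrom (image2 (· ∩ ·) {s | MeasurableSet[m₁] s} {s | MeasurableSet[m₂] s}) := by
  refine le_antisymm (sup_le (fun s hs => ?_) (fun s hs => ?_)) (generateFrom_le ?_)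
  · exact measurableSet_generateFrom ⟨s, hs, univ, MeasurableSet.univ, inter_univ s⟩
  · exact measurableSet_generateFrom ⟨univ, MeasurableSet.univ, s, hs, univ_inter s⟩
  · rintro _ ⟨s₁, hs₁, s₂, hs₂, rfl⟩
    exact MeasurableSet.inter (le_sup_left (a := m₁) _ hs₁) (le_sup_right (a := m₁) _ hs₂)

lemma MeasurableSpace.comap_pi_subtype {ι : Type*} {p : ι → Prop} {β : {i // p i} → Type*}
    [∀ k, MeasurableSpace (β k)] (f : ∀ k, Ω → β k) :
    MeasurableSpace.comap (fun ω k => f k ω) MeasurableSpace.pi =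
      ⨆ i, ⨆ (h : p i), MeasurableSpace.comap (f ⟨i, h⟩) inferInstance := by
  rw [MeasurableSpace.comap_process_pi f, iSup_subtype]

end PiSystem

namespace ProbabilityTheory

variable {Ω : Type*} {m' m₁ m₁' m₂ mΩ : MeasurableSpace Ω} [StandardBorelSpace Ω]
  {μ : Measure Ω} [IsFiniteMeasure μ] {hm' : m' ≤ mΩ}

lemma condIndep_comm : CondIndep m' m₁ m₂ hm' μ ↔ CondIndep m' m₂ m₁ hm' μ :=
  ⟨CondIndep.symm, CondIndep.symm⟩

lemma CondIndep.cond_sup_left (hm₁ : m₁ ≤ mΩ) (hm₂ : m₂ ≤ mΩ) (h : CondIndep m' m₁ m₂ hm' μ) :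
    CondIndep m' (m' ⊔ m₁) m₂ hm' μ := by
  refine CondIndepSets.condIndep (sup_le hm' hm₁) hm₂ isPiSystem_image2_inter
    (@isPiSystem_measurableSet Ω m₂) MeasurableSpace.sup_eq_generateFrom_image2_inter
    (@generateFrom_measurableSet Ω m₂).symm ?_
  rw [condIndep_iff m' m₁ m₂ hm' hm₁ hm₂] at h
  rw [condIndepSets_iff]
  · rintro _ t ⟨s, hs, u, hu, rfl⟩ ht
    have hu' := hm₁ _ hu
    calc μ⟦s ∩ u ∩ t | m'⟧ = μ⟦s ∩ (u ∩ t) | m'⟧ := by rw [inter_assoc]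
      _ =ᵐ[μ] s.indicator (μ⟦u ∩ t | m'⟧) :=
          condExp_indicator_inter_ae_eq hs (hu'.inter (hm₂ _ ht))
      _ =ᵐ[μ] s.indicator (μ⟦u | m'⟧ * μ⟦t | m'⟧) := (h u t hu ht).indicator
      _ = s.indicator (μ⟦u | m'⟧) * μ⟦t | m'⟧ := funext fun _ => indicator_mul_left _ _ _
      _ =ᵐ[μ] μ⟦s ∩ u | m'⟧ * μ⟦t | m'⟧ := (condExp_indicator_inter_ae_eq hs hu').symm.mul .rfl
  · rintro _ ⟨s, hs, u, hu, rfl⟩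
    exact (hm' _ hs).inter (hm₁ _ hu)
  · exact hm₂

lemma condIndep_iff_condExp_sup_ae_eq (hm₁ : m₁ ≤ mΩ) (hm₂ : m₂ ≤ mΩ) :
    CondIndep m' m₁ m₂ hm' μ ↔
      ∀ t, MeasurableSet[m₂] t → μ⟦t | m' ⊔ m₁⟧ =ᵐ[μ] μ⟦t | m'⟧ := by
  have hsup : m' ⊔ m₁ ≤ mΩ := sup_le hm' hm₁
  constructor
  · intro h t ht
    have hprod := (condIndep_iff _ _ _ hm' hsup hm₂ μ).1 (h.cond_sup_left hm₁ hm₂)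
    refine (ae_eq_condExp_of_forall_setIntegral_eq hsup ((integrable_const 1).indicator (hm₂ _ ht))
      (fun _ _ _ => integrable_condExp.integrableOn) (fun s hs _ => ?_)
      (stronglyMeasurable_condExp.mono (le_sup_left : m' ≤ m' ⊔ m₁)).aestronglyMeasurable).symm
    have hs' := hsup _ hs
    calc ∫ x in s, (μ⟦t | m'⟧) x ∂μ
        = ∫ x, μ[s.indicator (μ⟦t | m'⟧) | m'] x ∂μ := by
          rw [integral_condExp hm', integral_indicator hs']
      _ = ∫ x, ((μ⟦s | m'⟧) * μ⟦t | m'⟧) x ∂μ := integral_congr_ae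
          (condExp_indicator_ae_eq_condExp_mul stronglyMeasurable_condExp integrable_condExp hs')
      _ = ∫ x, (μ⟦s ∩ t | m'⟧) x ∂μ := integral_congr_ae (hprod s t hs ht).symm
      _ = ∫ x in s, t.indicator (fun _ => (1 : ℝ)) x ∂μ := by
          rw [integral_condExp hm', ← indicator_indicator, integral_indicator hs']
  · intro h
    rw [condIndep_iff _ _ _ hm' hm₁ hm₂]
    intro t₁ t₂ ht₁ ht₂
    calc μ⟦t₁ ∩ t₂ | m'⟧ =ᵐ[μ] μ[μ⟦t₁ ∩ t₂ | m' ⊔ m₁⟧ | m'] :=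
          (condExp_condExp_of_le le_sup_left hsup).symm
      _ =ᵐ[μ] μ[t₁.indicator (μ⟦t₂ | m' ⊔ m₁⟧) | m'] := condExp_congr_ae
          (condExp_indicator_inter_ae_eq (le_sup_right (a := m') _ ht₁) (hm₂ _ ht₂))
      _ =ᵐ[μ] μ[t₁.indicator (μ⟦t₂ | m'⟧) | m'] := condExp_congr_ae (h t₂ ht₂).indicator
      _ =ᵐ[μ] μ⟦t₁ | m'⟧ * μ⟦t₂ | m'⟧ :=
          condExp_indicator_ae_eq_condExp_mul stronglyMeasurable_condExp integrable_condExp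
            (hm₁ _ ht₁)

/-- Contraction (`←`), and decomposition with weak union (`→`). -/
lemma condIndep_sup_iff (hm₁ : m₁ ≤ mΩ) (hm₁' : m₁' ≤ mΩ) (hm₂ : m₂ ≤ mΩ) :
    CondIndep m' (m₁ ⊔ m₁') m₂ hm' μ ↔
      CondIndep m' m₁ m₂ hm' μ ∧ CondIndep (m' ⊔ m₁) m₁' m₂ (sup_le hm' hm₁) μ := by
  constructor
  · intro h
    have h₁ := condIndep_of_condIndep_of_le_left h le_sup_left
    refine ⟨h₁, (condIndep_iff_condExp_sup_ae_eq hm₁' hm₂).2 fun t ht => ?_⟩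
    rw [sup_assoc]
    exact ((condIndep_iff_condExp_sup_ae_eq (sup_le hm₁ hm₁') hm₂).1 h t ht).trans
      ((condIndep_iff_condExp_sup_ae_eq hm₁ hm₂).1 h₁ t ht).symm
  · rintro ⟨h₁, h₂⟩
    refine (condIndep_iff_condExp_sup_ae_eq (sup_le hm₁ hm₁') hm₂).2 fun t ht => ?_
    rw [← sup_assoc]
    exact ((condIndep_iff_condExp_sup_ae_eq hm₁' hm₂).1 h₂ t ht).trans
      ((condIndep_iff_condExp_sup_ae_eq hm₁ hm₂).1 h₁ t ht)

end ProbabilityTheory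

section FinIntervals

variable {α : Type*} [CompleteLattice α] {n : ℕ} (f : Fin (n + 1) → α)

lemma iSup_Iic_eq_iSup_Iio_sup {ι : Type*} [PartialOrder ι] (g : ι → α) (j : ι) :
    ⨆ k ∈ Iic j, g k = (⨆ k ∈ Iio j, g k) ⊔ g j := by
  rw [← Iio_insert, iSup_insert, sup_comm]

lemma Fin.iSup_Iio_zero : ⨆ k ∈ Iio (0 : Fin (n + 1)), f k = ⊥ := by
  simp

lemma Fin.iSup_Ioi_last : ⨆ k ∈ Ioi (Fin.last n), f k = ⊥ := by
  simp [not_lt.2 (Fin.le_last _)]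

lemma Fin.iSup_Iio_succ (i : Fin n) : ⨆ k ∈ Iio i.succ, f k = ⨆ k ∈ Iic i.castSucc, f k := by
  rw [show Iio i.succ = Iic i.castSucc from Set.ext fun _ => Fin.le_castSucc_iff.symm]

lemma Fin.iSup_Iic_succ (i : Fin n) :
    ⨆ k ∈ Iic i.succ, f k = (⨆ k ∈ Iic i.castSucc, f k) ⊔ f i.succ := by
  rw [iSup_Iic_eq_iSup_Iio_sup, Fin.iSup_Iio_succ]

lemma Fin.iSup_Ioi_castSucc (i : Fin n) :
    ⨆ k ∈ Ioi i.castSucc, f k = f i.succ ⊔ ⨆ k ∈ Ioi i.succ, f k := by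
  rw [show Ioi i.castSucc = Ici i.succ from Set.ext fun _ => Fin.castSucc_lt_iff_succ_le,
    ← Ioi_insert, iSup_insert]

end FinIntervals

namespace ProbabilityTheory

/-! `A k` and `B k` stand for `σ(X_k)` and `σ(Y_k)`. -/

variable {Ω : Type*} {mΩ : MeasurableSpace Ω} [StandardBorelSpace Ω] {μ : Measure Ω}
  [IsFiniteMeasure μ] {n : ℕ} {A B : Fin (n + 1) → MeasurableSpace Ω}

lemma condIndep_past_future_iff (hA : ∀ k, A k ≤ mΩ) (hB : ∀ k, B k ≤ mΩ) (j : Fin (n + 1)) :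
    CondIndep (⨆ k ∈ Iic j, A k) (⨆ k ∈ Iic j, B k) (⨆ k ∈ Ioi j, A k)
        (iSup₂_le fun k _ => hA k) μ ↔
      CondIndep (⨆ k ∈ Iic j, A k) (⨆ k ∈ Iio j, B k) (⨆ k ∈ Ioi j, A k)
          (iSup₂_le fun k _ => hA k) μ ∧
        CondIndep ((⨆ k ∈ Iic j, A k) ⊔ ⨆ k ∈ Iio j, B k) (B j) (⨆ k ∈ Ioi j, A k)
          (sup_le (iSup₂_le fun k _ => hA k) (iSup₂_le fun k _ => hB k)) μ := by
  rw [iSup_Iic_eq_iSup_Iio_sup B j]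
  exact condIndep_sup_iff (iSup₂_le fun k _ => hB k) (hB j) (iSup₂_le fun k _ => hA k)

lemma condIndep_past_future_castSucc_iff (hA : ∀ k, A k ≤ mΩ) (hB : ∀ k, B k ≤ mΩ)
    (i : Fin n) :
    CondIndep (⨆ k ∈ Iic i.castSucc, A k) (⨆ k ∈ Iic i.castSucc, B k)
        (⨆ k ∈ Ioi i.castSucc, A k) (iSup₂_le fun k _ => hA k) μ ↔
      CondIndep (⨆ k ∈ Iic i.castSucc, A k) (⨆ k ∈ Iic i.castSucc, B k) (A i.succ)
          (iSup₂_le fun k _ => hA k) μ ∧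
        CondIndep (⨆ k ∈ Iic i.succ, A k) (⨆ k ∈ Ioi i.succ, A k) (⨆ k ∈ Iic i.castSucc, B k)
          (iSup₂_le fun k _ => hA k) μ := by
  simp only [Fin.iSup_Iic_succ, Fin.iSup_Ioi_castSucc]
  rw [condIndep_comm, condIndep_sup_iff (hA _) (iSup₂_le fun k _ => hA k)
    (iSup₂_le fun k _ => hB k), condIndep_comm]

theorem forall_condIndep_current_future_iff (hA : ∀ k, A k ≤ mΩ) (hB : ∀ k, B k ≤ mΩ) :
    (∀ i : Fin n,
      CondIndep ((⨆ k ∈ Iic i.castSucc, A k) ⊔ ⨆ k ∈ Iio i.castSucc, B k) (B i.castSucc)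
        (⨆ k ∈ Ioi i.castSucc, A k)
        (sup_le (iSup₂_le fun k _ => hA k) (iSup₂_le fun k _ => hB k)) μ) ↔
      ∀ j, CondIndep (⨆ k ∈ Iic j, A k) (⨆ k ∈ Iic j, B k) (⨆ k ∈ Ioi j, A k)
        (iSup₂_le fun k _ => hA k) μ := by
  refine ⟨fun h j => ?_, fun h i => ((condIndep_past_future_iff hA hB _).1 (h _)).2⟩
  have h' : ∀ j : Fin (n + 1),
      CondIndep ((⨆ k ∈ Iic j, A k) ⊔ ⨆ k ∈ Iio j, B k) (B j) (⨆ k ∈ Ioi j, A k)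
        (sup_le (iSup₂_le fun k _ => hA k) (iSup₂_le fun k _ => hB k)) μ := by
    refine Fin.lastCases ?_ h
    rw [Fin.iSup_Ioi_last]
    exact condIndep_bot_right _
  induction j using Fin.induction with
  | zero =>
    refine (condIndep_past_future_iff hA hB 0).2 ⟨?_, h' 0⟩
    rw [Fin.iSup_Iio_zero]
    exact condIndep_bot_left _
  | succ i ih =>
    refine (condIndep_past_future_iff hA hB i.succ).2 ⟨?_, h' i.succ⟩
    rw [Fin.iSup_Iio_succ]
    exact ((condIndep_past_future_castSucc_iff hA hB i).1 ih).2.symm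

theorem forall_condIndep_past_next_iff (hA : ∀ k, A k ≤ mΩ) (hB : ∀ k, B k ≤ mΩ) :
    (∀ i : Fin n,
      CondIndep (⨆ k ∈ Iic i.castSucc, A k) (⨆ k ∈ Iic i.castSucc, B k) (A i.succ)
        (iSup₂_le fun k _ => hA k) μ) ↔
      ∀ j, CondIndep (⨆ k ∈ Iic j, A k) (⨆ k ∈ Iic j, B k) (⨆ k ∈ Ioi j, A k)
        (iSup₂_le fun k _ => hA k) μ := by
  refine ⟨fun h j => ?_, fun h i => ((condIndep_past_future_castSucc_iff hA hB i).1 (h _)).1⟩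
  induction j using Fin.reverseInduction with
  | last =>
    rw [Fin.iSup_Ioi_last]
    exact condIndep_bot_right _
  | cast i ih =>
    refine (condIndep_past_future_castSucc_iff hA hB i).2 ⟨h i, ?_⟩
    have hG : ⨆ k ∈ Iic i.castSucc, B k ≤ ⨆ k ∈ Iic i.succ, B k := by
      rw [Fin.iSup_Iic_succ B]
      exact le_sup_left
    exact (condIndep_of_condIndep_of_le_left ih hG).symm

end ProbabilityTheory

/-- For random variables `(X^n, Y^n)` with values in Polish product spaces under
a probability measure `P`, the following families of conditional independence conditions are
equivalent: (i) for each `i = 0, …, n-1`, `Y_i` is conditionally independent of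
`(X_{i+1}, …, X_n)` given `(X^i, Y^{i-1})`; (ii) for each `i = 0, …, n-1`, `Y^i` is
conditionally independent of `X_{i+1}` given `X^i`. -/
theorem condIndep_future_iff_condIndep_next
    {n : ℕ} (X Y : ℕ → Type)
    [∀ i, MeasurableSpace (X i)]
    [∀ i, MeasurableSpace (Y i)]
    (Ω : Type) [MeasurableSpace Ω] [StandardBorelSpace Ω]
    (P : Measure Ω) [IsProbabilityMeasure P]
    (Xp : ∀ i : Fin (n + 1), Ω → X i) (Yp : ∀ i : Fin (n + 1), Ω → Y i)
    (hXp : ∀ i, Measurable (Xp i)) (hYp : ∀ i, Measurable (Yp i)) :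
    (∀ i : Fin (n + 1), (h : (i : ℕ) < n) →
        CondIndepFun
          (MeasurableSpace.comap
            (fun ω : Ω =>
              ((fun j : {k : Fin (n + 1) // k ≤ i} => Xp j ω),
               (fun j : {k : Fin (n + 1) // k < i} => Yp j ω)))
            inferInstance)
          (Measurable.comap_le (by fun_prop (disch := aesop)))
          (fun ω => Yp i ω)
          (fun ω => fun j : {k : Fin (n + 1) // i < k} => Xp j ω)
          P)
    ↔ (∀ i : Fin (n + 1), (h : (i : ℕ) < n) →
        CondIndepFun
          (MeasurableSpace.comap
            (fun ω : Ω => fun j : {k : Fin (n + 1) // k ≤ i} => Xp j ω)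
            inferInstance)
          (Measurable.comap_le (by fun_prop (disch := aesop)))
          (fun ω => fun j : {k : Fin (n + 1) // k ≤ i} => Yp j ω)
          (fun ω => Xp ⟨(i : ℕ) + 1, by omega⟩ ω)
          P) := by
  have hA : ∀ k, MeasurableSpace.comap (Xp k) inferInstance ≤ _ := fun k => (hXp k).comap_le
  have hB : ∀ k, MeasurableSpace.comap (Yp k) inferInstance ≤ _ := fun k => (hYp k).comap_le
  have key := (forall_condIndep_current_future_iff (μ := P) hA hB).trans
    (forall_condIndep_past_next_iff hA hB).symm
  simp only [inferInstance, Prod.instMeasurableSpace, condIndepFun_iff_condIndep,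
    MeasurableSpace.comap_prodMk, MeasurableSpace.comap_pi_subtype]
  exact ⟨fun h i hi => key.1 (fun j => h j.castSucc j.isLt) ⟨i, hi⟩,
    fun h i hi => key.2 (fun j => h j.castSucc j.isLt) ⟨i, hi⟩⟩
end

section
/- The set Q_ad = L^w_∞(μ, Π_rba(Y_{0,n})) of weak*-measurable, μ-essentially bounded functions on X_{0,n} with values in the regular bounded finitely additive probability measures on Y_{0,n} is compact in the weak* topology of L^w_∞(μ, M_rba(Y_{0,n})). -/
open MeasureTheory ProbabilityTheory BoundedContinuousFunction
open scoped ENNReal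

noncomputable section

/-- The source product space `X_{0,n}`. -/
abbrev Xn (X : ℕ → Type) (n : ℕ) := ∀ j : Fin (n + 1), X j

/-- The reconstruction product space `Y_{0,n}`. -/
abbrev Yn (Y : ℕ → Type) (n : ℕ) := ∀ j : Fin (n + 1), Y j

/-- The Banach space `L_1(μ, BC(Y_{0,n}))` of `μ`-integrable functions with values in the
Banach space `BC(Y_{0,n})` of bounded continuous real-valued functions on `Y_{0,n}`. -/
abbrev L1BC (X Y : ℕ → Type) (n : ℕ) [∀ i, MeasurableSpace (X i)]
    [∀ i, TopologicalSpace (Y i)] (μ : Measure (Xn X n)) :=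
  Lp (E := Yn Y n →ᵇ ℝ) 1 μ

/-- `L^w_∞(μ, M_rba(Y_{0,n}))`: the topological dual of `L_1(μ, BC(Y_{0,n}))`, equipped with
the weak* topology (by the duality theorem for the "lifting", this dual is isometrically
isomorphic to the space of weak*-measurable μ-essentially bounded `M_rba(Y_{0,n})`-valued
functions). -/
abbrev Lwinf (X Y : ℕ → Type) (n : ℕ) [∀ i, MeasurableSpace (X i)]
    [∀ i, TopologicalSpace (Y i)] (μ : Measure (Xn X n)) :=
  WeakDual ℝ (L1BC X Y n μ)

variable {n : ℕ} {X Y : ℕ → Type}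
  [∀ i, MeasurableSpace (X i)] [∀ i, TopologicalSpace (X i)]
  [∀ i, PolishSpace (X i)] [∀ i, BorelSpace (X i)]
  [∀ i, MeasurableSpace (Y i)] [∀ i, TopologicalSpace (Y i)]
  [∀ i, PolishSpace (Y i)] [∀ i, BorelSpace (Y i)]
  (μ : Measure (Xn X n)) [IsProbabilityMeasure μ]

/-- `Q_ad = L^w_∞(μ, Π_rba(Y_{0,n}))`: the elements of the dual corresponding to families of
regular bounded finitely additive *probability* measures on `Y_{0,n}`, i.e. the positive
elements of total mass one. -/
def Qad : Set (Lwinf X Y n μ) :=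
  {Q | (∀ φ : L1BC X Y n μ, (∀ᵐ x ∂μ, ∀ y, 0 ≤ φ x y) → 0 ≤ Q φ) ∧
       (∀ (φ : L1BC X Y n μ) (g : Xn X n → ℝ),
         (∀ᵐ x ∂μ, φ x = BoundedContinuousFunction.const (Yn Y n) (g x)) →
           Q φ = ∫ x, g x ∂μ)}

/-! By Banach–Alaoglu it suffices that `Qad μ` is weak* closed and lies in the unit ball.
It is closed because each defining condition constrains a single weak*-continuous evaluation
`Q ↦ Q φ`. For the bound, positivity makes `Q` monotone, and `±φ` are dominated pointwise by
`x ↦ const ‖φ x‖`, on which the normalisation condition forces the value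
`∫ ‖φ x‖ ∂μ = ‖φ‖₁`. -/

namespace BoundedContinuousFunction

variable {α β : Type*} [TopologicalSpace α]

theorem lipschitzWith_const [PseudoMetricSpace β] : LipschitzWith 1 (const α : β → α →ᵇ β) :=
  LipschitzWith.of_dist_le_mul fun a b => by
    rw [NNReal.coe_one, one_mul]
    exact (dist_le dist_nonneg).2 fun _ => le_rfl

end BoundedContinuousFunction

namespace MeasureTheory

variable {α T : Type*} [MeasurableSpace α] [TopologicalSpace T] {μ : Measure α}

theorem MemLp.boundedContinuousFunction_const {E : Type*} [NormedAddCommGroup E] {p : ℝ≥0∞}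
    {f : α → E} (hf : MemLp f p μ) : MemLp (fun x => const T (f x)) p μ :=
  lipschitzWith_const.comp_memLp rfl hf

theorem apply_le_apply_of_ae_forall_le {p : ℝ≥0∞} [Fact (1 ≤ p)]
    {Q : StrongDual ℝ (Lp (T →ᵇ ℝ) p μ)}
    (hQ : ∀ φ : Lp (T →ᵇ ℝ) p μ, (∀ᵐ x ∂μ, ∀ y, 0 ≤ φ x y) → 0 ≤ Q φ)
    {φ ψ : Lp (T →ᵇ ℝ) p μ} (h : ∀ᵐ x ∂μ, ∀ y, φ x y ≤ ψ x y) : Q φ ≤ Q ψ := by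
  have : 0 ≤ Q (ψ - φ) := hQ _ <| by
    filter_upwards [Lp.coeFn_sub ψ φ, h] with x hsub hle y
    rw [hsub, Pi.sub_apply, coe_sub, Pi.sub_apply, sub_nonneg]
    exact hle y
  rwa [map_sub, sub_nonneg] at this

theorem norm_le_one_of_nonneg_of_apply_const {Q : StrongDual ℝ (Lp (T →ᵇ ℝ) 1 μ)}
    (hpos : ∀ φ : Lp (T →ᵇ ℝ) 1 μ, (∀ᵐ x ∂μ, ∀ y, 0 ≤ φ x y) → 0 ≤ Q φ)
    (hconst : ∀ (φ : Lp (T →ᵇ ℝ) 1 μ) (g : α → ℝ), (∀ᵐ x ∂μ, φ x = const T (g x)) →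
      Q φ = ∫ x, g x ∂μ) :
    ‖Q‖ ≤ 1 := by
  refine ContinuousLinearMap.opNorm_le_bound _ zero_le_one fun φ => ?_
  have hψ := (Lp.memLp φ).norm.boundedContinuousFunction_const (T := T)
  have hQψ : Q (hψ.toLp _) = ‖φ‖ := by
    rw [L1.norm_eq_integral_norm]
    exact hconst _ _ hψ.coeFn_toLp
  have hdom (φ' : Lp (T →ᵇ ℝ) 1 μ) (h : ∀ᵐ x ∂μ, ∀ y, φ' x y ≤ ‖φ x‖) : Q φ' ≤ ‖φ‖ := by
    rw [← hQψ]
    refine apply_le_apply_of_ae_forall_le hpos ?_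
    filter_upwards [h, hψ.coeFn_toLp] with x hx hxψ y
    simpa only [hxψ, const_apply'] using hx y
  have habs (x y) : |φ x y| ≤ ‖φ x‖ := (Real.norm_eq_abs _).symm.trans_le (norm_coe_le_norm _ y)
  rw [one_mul, Real.norm_eq_abs, abs_le']
  refine ⟨hdom φ (.of_forall fun x y => (le_abs_self _).trans (habs x y)), ?_⟩
  rw [← map_neg]
  refine hdom (-φ) ?_
  filter_upwards [Lp.coeFn_neg φ] with x hx y
  rw [hx, Pi.neg_apply, coe_neg, Pi.neg_apply]
  exact (neg_le_abs _).trans (habs x y)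

end MeasureTheory

/-- The set `Q_ad = L^w_∞(μ, Π_rba(Y_{0,n}))` of (equivalence classes of)
weak*-measurable μ-essentially bounded functions with values in the regular bounded finitely
additive probability measures on `Y_{0,n}` is compact in the weak* topology of
`L^w_∞(μ, M_rba(Y_{0,n}))`. -/
theorem Qad_weakStar_compact : IsCompact (Qad μ : Set (Lwinf X Y n μ)) := by
  have hbounded : (Qad μ : Set (Lwinf X Y n μ)) ⊆
      WeakDual.toStrongDual ⁻¹' Metric.closedBall 0 1 := fun Q hQ =>
    (dist_zero_right (WeakDual.toStrongDual Q)).trans_le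
      (norm_le_one_of_nonneg_of_apply_const hQ.1 hQ.2)
  have hclosed : IsClosed (Qad μ : Set (Lwinf X Y n μ)) := by
    simp only [Qad, Set.ofPred_and, Set.ofPred_forall]
    exact (isClosed_iInter fun φ => isClosed_iInter fun _ =>
        isClosed_le continuous_const (WeakDual.eval_continuous φ)).inter
      (isClosed_iInter fun φ => isClosed_iInter fun _ => isClosed_iInter fun _ =>
        isClosed_eq (WeakDual.eval_continuous φ) continuous_const)
  exact WeakDual.isCompact_of_bounded_of_closed
    ((WeakDual.isBounded_closedBall 0 1).subset hbounded) hclosed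
end
end

section
/- Let d_{0,n} : X_{0,n} × Y_{0,n} → [0,∞) be measurable with d_{0,n} ∈ L_1(μ, BC(Y_{0,n})), and for D ≥ 0 define Q_{0,n}(D) = { q ∈ Q_ad : ℓ_{d_{0,n}}(q) ≤ D }, where ℓ_{d_{0,n}}(q) = ∫_{X_{0,n}} ( ∫_{Y_{0,n}} d_{0,n}(x^n,y^n) q(dy^n; x^n) ) μ(dx^n). Then Q_{0,n}(D) is a weak*-bounded and weak*-closed subset of Q_ad. -/
open MeasureTheory ProbabilityTheory BoundedContinuousFunction
open scoped ENNReal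

noncomputable section

variable {n : ℕ} {X Y : ℕ → Type}
  [∀ i, MeasurableSpace (X i)] [∀ i, TopologicalSpace (X i)]
  [∀ i, PolishSpace (X i)] [∀ i, BorelSpace (X i)]
  [∀ i, MeasurableSpace (Y i)] [∀ i, TopologicalSpace (Y i)]
  [∀ i, PolishSpace (Y i)] [∀ i, BorelSpace (Y i)]
  (μ : Measure (Xn X n)) [IsProbabilityMeasure μ]

/-!
An element `Q` of `Q_ad` is a positive functional taking the value `∫ ‖φ x‖ dμ = ‖φ‖₁` on the
fibrewise constant function `x ↦ ‖φ x‖`, which dominates `φ`; hence `|Q φ| ≤ ‖φ‖₁`, so `Q_ad` lies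
in the unit ball of the dual and is weak*-bounded. Every condition defining `Q_{0,n}(D)` is a
closed condition on a single evaluation `Q ↦ Q φ`, and these are weak*-continuous.
-/

section PositiveNormalizedFunctional

variable {Ω α : Type*} [MeasurableSpace Ω] [TopologicalSpace α] {μ : Measure Ω}

lemma BoundedContinuousFunction.lipschitzWith_const_norm :
    LipschitzWith 1 fun g : α →ᵇ ℝ => const α ‖g‖ := by
  refine LipschitzWith.of_dist_le_mul fun g h => ?_
  rw [NNReal.coe_one, one_mul, dist_le dist_nonneg]
  exact fun _ => (dist_norm_norm_le g h).trans_eq (dist_eq_norm g h).symm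

lemma MeasureTheory.Lp.exists_ae_eq_const_norm {p : ℝ≥0∞} (φ : Lp (α →ᵇ ℝ) p μ) :
    ∃ ψ : Lp (α →ᵇ ℝ) p μ, ∀ᵐ x ∂μ, ψ x = const α ‖φ x‖ :=
  ⟨lipschitzWith_const_norm.compLp (by ext; simp) φ, LipschitzWith.coeFn_compLp _ _ _⟩

lemma apply_le_norm_of_nonneg_of_apply_const {Q : StrongDual ℝ (Lp (α →ᵇ ℝ) 1 μ)}
    (hpos : ∀ φ : Lp (α →ᵇ ℝ) 1 μ, (∀ᵐ x ∂μ, ∀ y, 0 ≤ φ x y) → 0 ≤ Q φ)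
    (hconst : ∀ (φ : Lp (α →ᵇ ℝ) 1 μ) (g : Ω → ℝ),
      (∀ᵐ x ∂μ, φ x = const α (g x)) → Q φ = ∫ x, g x ∂μ)
    (φ : Lp (α →ᵇ ℝ) 1 μ) : Q φ ≤ ‖φ‖ := by
  obtain ⟨ψ, hψ⟩ := Lp.exists_ae_eq_const_norm φ
  have hQψ : Q ψ = ‖φ‖ := by rw [hconst ψ _ hψ, L1.norm_eq_integral_norm]
  have hψφ : 0 ≤ Q (ψ - φ) := by
    refine hpos _ ?_
    filter_upwards [Lp.coeFn_sub ψ φ, hψ] with x hsub hψx y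
    rw [hsub, Pi.sub_apply, hψx]
    exact norm_sub_nonneg (φ x) y
  rw [map_sub] at hψφ
  linarith

lemma opNorm_le_one_of_nonneg_of_apply_const {Q : StrongDual ℝ (Lp (α →ᵇ ℝ) 1 μ)}
    (hpos : ∀ φ : Lp (α →ᵇ ℝ) 1 μ, (∀ᵐ x ∂μ, ∀ y, 0 ≤ φ x y) → 0 ≤ Q φ)
    (hconst : ∀ (φ : Lp (α →ᵇ ℝ) 1 μ) (g : Ω → ℝ),
      (∀ᵐ x ∂μ, φ x = const α (g x)) → Q φ = ∫ x, g x ∂μ) :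
    ‖Q‖ ≤ 1 := by
  refine ContinuousLinearMap.opNorm_le_bound _ zero_le_one fun φ => ?_
  have hneg := apply_le_norm_of_nonneg_of_apply_const hpos hconst (-φ)
  rw [map_neg, norm_neg] at hneg
  rw [one_mul, Real.norm_eq_abs, abs_le]
  exact ⟨by linarith, apply_le_norm_of_nonneg_of_apply_const hpos hconst φ⟩

end PositiveNormalizedFunctional

lemma isBounded_Qad {n : ℕ} {X Y : ℕ → Type} [∀ i, MeasurableSpace (X i)]
    [∀ i, TopologicalSpace (Y i)] (μ : Measure (Xn X n)) :
    Bornology.IsBounded (Qad (Y := Y) μ) :=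
  (WeakDual.isBounded_toStrongDual_preimage_iff_isBounded.2
    (Metric.isBounded_closedBall (x := 0) (r := 1))).subset
    fun _ hQ => mem_closedBall_zero_iff.2 (opNorm_le_one_of_nonneg_of_apply_const hQ.1 hQ.2)

lemma isClosed_Qad {n : ℕ} {X Y : ℕ → Type} [∀ i, MeasurableSpace (X i)]
    [∀ i, TopologicalSpace (Y i)] (μ : Measure (Xn X n)) :
    IsClosed (Qad (Y := Y) μ) := by
  simp only [Qad, Set.ofPred_and, Set.ofPred_forall]
  exact (isClosed_iInter fun φ => isClosed_iInter fun _ =>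
      isClosed_le continuous_const (WeakDual.eval_continuous φ)).inter
    (isClosed_iInter fun φ => isClosed_iInter fun _ => isClosed_iInter fun _ =>
      isClosed_eq (WeakDual.eval_continuous φ) continuous_const)

theorem constraint_set_weakStar_closed_bounded
    (d : L1BC X Y n μ) (D : ℝ) :
    Bornology.IsVonNBounded ℝ {Q : Lwinf X Y n μ | Q ∈ Qad μ ∧ Q d ≤ D} ∧
    IsClosed {Q : Lwinf X Y n μ | Q ∈ Qad μ ∧ Q d ≤ D} :=
  ⟨WeakDual.isBounded_iff_isVonNBounded.1 ((isBounded_Qad μ).subset fun _ hQ => hQ.1),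
    (isClosed_Qad μ).inter (isClosed_le (WeakDual.eval_continuous d) continuous_const)⟩
end
end

section
/- Let X_{0,n}, Y_{0,n} be Polish spaces and d_{0,n} : X_{0,n} × Y_{0,n} → [0,∞] a measurable, nonnegative, extended real-valued function such that for μ-almost all x^n ∈ X_{0,n} the map y^n ↦ d_{0,n}(x^n, y^n) is continuous on Y_{0,n}, and d_{0,n} ∈ L_1(μ, BC(Y_{0,n})). For D ∈ [0,∞), if the set Q_{0,n}(D) = { q ∈ Q_ad : ∫_{X_{0,n}} ( ∫_{Y_{0,n}} d_{0,n}(x^n,y^n) q(dy^n; x^n) ) μ(dx^n) ≤ D } is nonempty, then Q_{0,n}(D) is a weak*-closed subset of Q_ad and hence weak*-compact. -/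
/-!
`Q_ad` is cut out by weak*-closed conditions (positivity, and the values on integrands that are
constant in `y`), so it is weak*-closed. For `Q ∈ Q_ad` and `f ∈ L_1(μ, BC(Y))`, positivity
applied to `‖f(·)‖ ± f` gives `|Q f| ≤ Q ‖f(·)‖ = ∫ ‖f x‖ dμ = ‖f‖`, so `Q_ad` lies in the unit
ball of the dual and is weak*-compact by Banach–Alaoglu. The constraint `Q φ ≤ D` is a
weak*-closed half-space, hence `Q_{0,n}(D)` is a closed subset of a compact set.
-/

open MeasureTheory ProbabilityTheory BoundedContinuousFunction
open scoped ENNReal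

noncomputable section

variable {n : ℕ} {X Y : ℕ → Type}
  [∀ i, MeasurableSpace (X i)] [∀ i, TopologicalSpace (X i)]
  [∀ i, PolishSpace (X i)] [∀ i, BorelSpace (X i)]
  [∀ i, MeasurableSpace (Y i)] [∀ i, TopologicalSpace (Y i)]
  [∀ i, PolishSpace (Y i)] [∀ i, BorelSpace (Y i)]
  (μ : Measure (Xn X n)) [IsProbabilityMeasure μ]

theorem BoundedContinuousFunction.lipschitzWith_const_s8 {α β : Type*} [TopologicalSpace α]
    [PseudoMetricSpace β] : LipschitzWith 1 (const α : β → α →ᵇ β) :=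
  LipschitzWith.of_dist_le_mul fun a b => by
    rw [NNReal.coe_one, one_mul, dist_le dist_nonneg]
    exact fun _ => le_rfl

section ConstNorm

variable {α Z : Type*} [MeasurableSpace α] {ν : Measure α} [TopologicalSpace Z]
  {p : ℝ≥0∞}

theorem MeasureTheory.MemLp.const_norm {f : α → Z →ᵇ ℝ} (hf : MemLp f p ν) :
    MemLp (fun x => const Z ‖f x‖) p ν :=
  hf.of_le (lipschitzWith_const_s8.continuous.comp_aestronglyMeasurable hf.1.norm)
    (ae_of_all _ fun _ => (norm_const_le _).trans (norm_norm _).le)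

def MeasureTheory.Lp.constNorm (f : Lp (Z →ᵇ ℝ) p ν) : Lp (Z →ᵇ ℝ) p ν :=
  (Lp.memLp f).const_norm.toLp _

theorem MeasureTheory.Lp.coeFn_constNorm (f : Lp (Z →ᵇ ℝ) p ν) :
    Lp.constNorm f =ᵐ[ν] fun x => const Z ‖f x‖ :=
  MemLp.coeFn_toLp _

theorem MeasureTheory.Lp.abs_apply_le_apply_constNorm {F : Type*} [FunLike F (Lp (Z →ᵇ ℝ) p ν) ℝ]
    [AddMonoidHomClass F (Lp (Z →ᵇ ℝ) p ν) ℝ] (Q : F)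
    (hQ : ∀ f : Lp (Z →ᵇ ℝ) p ν, (∀ᵐ x ∂ν, ∀ y, 0 ≤ f x y) → 0 ≤ Q f)
    (f : Lp (Z →ᵇ ℝ) p ν) : |Q f| ≤ Q (Lp.constNorm f) := by
  have hsub : 0 ≤ Q (Lp.constNorm f - f) := hQ _ <| by
    filter_upwards [Lp.coeFn_constNorm f, Lp.coeFn_sub (Lp.constNorm f) f] with x hx hsub y
    rw [hsub, Pi.sub_apply, hx, coe_sub, Pi.sub_apply, const_apply', sub_nonneg]
    exact (le_abs_self _).trans (norm_coe_le_norm (f x) y)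
  have hadd : 0 ≤ Q (Lp.constNorm f + f) := hQ _ <| by
    filter_upwards [Lp.coeFn_constNorm f, Lp.coeFn_add (Lp.constNorm f) f] with x hx hadd y
    rw [hadd, Pi.add_apply, hx, coe_add, Pi.add_apply, const_apply', ← neg_le_iff_add_nonneg]
    exact (neg_le_abs _).trans (norm_coe_le_norm (f x) y)
  rw [map_sub, sub_nonneg] at hsub
  rw [map_add] at hadd
  exact abs_le.2 ⟨by linarith, hsub⟩

end ConstNorm

section Qad

omit [∀ i, TopologicalSpace (X i)] [∀ i, PolishSpace (X i)] [∀ i, BorelSpace (X i)]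
  [∀ i, MeasurableSpace (Y i)] [∀ i, PolishSpace (Y i)] [∀ i, BorelSpace (Y i)]
  [IsProbabilityMeasure μ]

theorem isClosed_Qad_s8 : IsClosed (Qad (X := X) (Y := Y) μ) := by
  simp only [Qad, Set.ofPred_and, Set.ofPred_forall]
  exact (isClosed_iInter fun φ => isClosed_iInter fun _ =>
      isClosed_le continuous_const (WeakDual.eval_continuous φ)).inter
    (isClosed_iInter fun φ => isClosed_iInter fun _ => isClosed_iInter fun _ =>
      isClosed_eq (WeakDual.eval_continuous φ) continuous_const)

theorem norm_toStrongDual_le_one_of_mem_Qad {Q : Lwinf X Y n μ} (hQ : Q ∈ Qad μ) :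
    ‖WeakDual.toStrongDual Q‖ ≤ 1 :=
  ContinuousLinearMap.opNorm_le_bound _ zero_le_one fun χ =>
    calc ‖Q χ‖ ≤ Q (Lp.constNorm χ) := Lp.abs_apply_le_apply_constNorm Q hQ.1 χ
      _ = ∫ x, ‖χ x‖ ∂μ := hQ.2 _ _ (Lp.coeFn_constNorm χ)
      _ = 1 * ‖χ‖ := by rw [one_mul, L1.norm_eq_integral_norm]

theorem isCompact_Qad : IsCompact (Qad (X := X) (Y := Y) μ) :=
  (WeakDual.isCompact_closedBall 0 1).of_isClosed_subset (isClosed_Qad_s8 μ) fun _ hQ => by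
    simpa using norm_toStrongDual_le_one_of_mem_Qad μ hQ

end Qad

theorem constraint_set_weakStar_closed_compact
    (φ : L1BC X Y n μ)
    (D : ℝ) :
    IsClosed {Q : Lwinf X Y n μ | Q ∈ Qad μ ∧ Q φ ≤ D} ∧
    IsCompact {Q : Lwinf X Y n μ | Q ∈ Qad μ ∧ Q φ ≤ D} := by
  have hclosed : IsClosed {Q : Lwinf X Y n μ | Q ∈ Qad μ ∧ Q φ ≤ D} :=
    (isClosed_Qad_s8 μ).inter (isClosed_le (WeakDual.eval_continuous φ) continuous_const)
  exact ⟨hclosed, (isCompact_Qad μ).of_isClosed_subset hclosed fun _ hQ => hQ.1⟩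
end
end
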